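/- Let E be a finite type, let J be a nonempty finite index set, and for each j ∈ J let w_j : E → ℝ≥0 be a nonnegative weight function. Define the XOS function v(S) := max_{j ∈ J} Σ_{i ∈ S} w_j(i), and let y be a natural number. Then the item truncation v'(S) := max_{T ⊆ S, |T| ≤ y} v(T) is again XOS: there exist a nonempty finite index set J' and nonnegative weight functions w'_j : E → ℝ≥0 for j ∈ J' such that v'(S) = max_{j ∈ J'} Σ_{i ∈ S} w'_j(i) for every S. (That is, the class of XOS valuations is closed under item truncation.) -/

import Mathlib

/-!
Each clause `j` of an XOS function and each set `T` with `|T| ≤ y` give the additive function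
`S ↦ Σ_{i ∈ S ∩ T} w_j(i)`. The maximum of these is the truncation: for `T ⊆ S` it recovers
`Σ_{i ∈ T} w_j(i)`, and in general `S ∩ T` is itself an admissible subset of `S`.
-/

open Finset

/-- Item truncation at `y` of a real-valued set function:
`v'(S) = max_{T ⊆ S, |T| ≤ y} v(T)` (the empty set is always a candidate). -/
noncomputable def itemTruncR {E : Type*} (y : ℕ) (v : Finset E → ℝ)
    (S : Finset E) : ℝ :=
  (S.powerset.filter (fun T => T.card ≤ y)).sup' ⟨∅, by simp⟩ v

def IsXOS {E : Type*} (v : Finset E → ℝ) : Prop :=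
  ∃ (ι' : Type) (J' : Finset ι') (hJ' : J'.Nonempty) (w' : ι' → E → ℝ),
    (∀ j ∈ J', ∀ i : E, 0 ≤ w' j i) ∧
    ∀ S : Finset E, v S = J'.sup' hJ' (fun j => ∑ i ∈ S, w' j i)

theorem Finset.Nonempty.univ_fin_card {κ : Type*} {K : Finset κ} (hK : K.Nonempty) :
    (univ : Finset (Fin K.card)).Nonempty :=
  ⟨⟨0, K.card_pos.2 hK⟩, mem_univ _⟩

theorem Finset.sup'_eq_sup'_equivFin {κ α : Type*} [SemilatticeSup α] (K : Finset κ)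
    (hK : K.Nonempty) (f : κ → α) :
    K.sup' hK f = univ.sup' hK.univ_fin_card fun k => f (K.equivFin.symm k) := by
  apply le_antisymm
  · refine sup'_le _ _ fun b hb => ?_
    simpa using le_sup' (fun k => f (K.equivFin.symm k)) (mem_univ (K.equivFin ⟨b, hb⟩))
  · exact sup'_le _ _ fun k _ => le_sup' f (K.equivFin.symm k).2

/-- Reindexing by `Fin K.card` moves the index type of `K` into `Type`. -/
theorem isXOS_of_eq_sup' {E κ : Type*} (K : Finset κ) (hK : K.Nonempty) (w : κ → E → ℝ)
    (hw : ∀ k ∈ K, ∀ i, 0 ≤ w k i) (v : Finset E → ℝ)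
    (hv : ∀ S, v S = K.sup' hK fun k => ∑ i ∈ S, w k i) : IsXOS v :=
  ⟨Fin K.card, univ, hK.univ_fin_card, fun k => w (K.equivFin.symm k),
    fun k _ => hw _ (K.equivFin.symm k).2, fun S => (hv S).trans (K.sup'_eq_sup'_equivFin hK _)⟩

theorem itemTruncR_eq_sup'_product {E ι : Type*} [Fintype E] [DecidableEq E] (J : Finset ι)
    (hJ : J.Nonempty) (w : ι → E → ℝ) (v : Finset E → ℝ)
    (hv : ∀ S, v S = J.sup' hJ fun j => ∑ i ∈ S, w j i) (y : ℕ) (S : Finset E) :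
    itemTruncR y v S =
      (J ×ˢ ({T | T.card ≤ y} : Finset (Finset E))).sup' (hJ.product ⟨∅, by simp⟩)
        fun p => ∑ i ∈ S, if i ∈ p.2 then w p.1 i else 0 := by
  simp only [sum_ite_mem]
  apply le_antisymm
  · refine sup'_le _ _ fun T hT => ?_
    rw [mem_filter, mem_powerset] at hT
    rw [hv]
    refine sup'_le _ _ fun j hj => ?_
    have hjT : (j, T) ∈ J ×ˢ ({T | T.card ≤ y} : Finset (Finset E)) := by simp [hj, hT.2]
    exact le_sup'_of_le _ hjT (by rw [inter_eq_right.2 hT.1])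
  · refine sup'_le _ _ fun ⟨j, T⟩ hjT => ?_
    rw [mem_product, mem_filter] at hjT
    have hST : S ∩ T ∈ S.powerset.filter (fun T => T.card ≤ y) :=
      mem_filter.2 ⟨mem_powerset.2 inter_subset_left,
        (card_le_card inter_subset_right).trans hjT.2.2⟩
    calc ∑ i ∈ S ∩ T, w j i
        ≤ v (S ∩ T) := hv (S ∩ T) ▸ le_sup' (fun j => ∑ i ∈ S ∩ T, w j i) hjT.1
      _ ≤ itemTruncR y v S := le_sup' v hST

theorem xos_closed_under_itemTruncation_general
    {E : Type*} [Fintype E]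
    {ι : Type*} (J : Finset ι) (hJ : J.Nonempty)
    (w : ι → E → ℝ) (hw : ∀ j ∈ J, ∀ i : E, 0 ≤ w j i)
    (v : Finset E → ℝ)
    (hv : ∀ S : Finset E, v S = J.sup' hJ (fun j => ∑ i ∈ S, w j i))
    (y : ℕ) :
    ∃ (ι' : Type) (J' : Finset ι') (hJ' : J'.Nonempty) (w' : ι' → E → ℝ),
      (∀ j ∈ J', ∀ i : E, 0 ≤ w' j i) ∧
      (∀ S : Finset E,
        itemTruncR y v S = J'.sup' hJ' (fun j => ∑ i ∈ S, w' j i)) := by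
  classical
  have hw' : ∀ p ∈ J ×ˢ ({T | T.card ≤ y} : Finset (Finset E)), ∀ i,
      0 ≤ if i ∈ p.2 then w p.1 i else 0 := fun p hp i => by
    split_ifs
    exacts [hw _ (mem_product.1 hp).1 i, le_rfl]
  exact isXOS_of_eq_sup' _ _ _ hw' _ (itemTruncR_eq_sup'_product J hJ w v hv y)

/-- XOS valuations are closed under item truncation: if
`v(S) = max_{j ∈ J} Σ_{i ∈ S} w_j(i)` for a nonempty finite index set `J` and
nonnegative weights `w_j`, then for any `y` the item truncation
`v'(S) = max_{T ⊆ S, |T| ≤ y} v(T)` is again a pointwise maximum of finitely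
many nonnegative additive functions. -/
theorem xos_closed_under_itemTruncation
    {E : Type*} [Fintype E] [DecidableEq E]
    {ι : Type*} (J : Finset ι) (hJ : J.Nonempty)
    (w : ι → E → ℝ) (hw : ∀ j ∈ J, ∀ i : E, 0 ≤ w j i)
    (v : Finset E → ℝ)
    (hv : ∀ S : Finset E, v S = J.sup' hJ (fun j => ∑ i ∈ S, w j i))
    (y : ℕ) :
    ∃ (ι' : Type) (J' : Finset ι') (hJ' : J'.Nonempty) (w' : ι' → E → ℝ),
      (∀ j ∈ J', ∀ i : E, 0 ≤ w' j i) ∧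
      (∀ S : Finset E,
        itemTruncR y v S = J'.sup' hJ' (fun j => ∑ i ∈ S, w' j i)) :=
  xos_closed_under_itemTruncation_general J hJ w hw v hv y
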